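/- Let 𝔘 be a maximal essential filter (essential ultrafilter) on ℝⁿ. Then for every set A ⊆ ℝⁿ, either A ∈ 𝔘 or ℝⁿ \ A ∈ 𝔘. -/
import Mathlib


open MeasureTheory

/-- A filter on `ℝⁿ` (proper, i.e. not containing `∅`) is *essential* if it is closed
under modification of its members by sets of Lebesgue outer measure zero. -/
def EssentialFilter {n : ℕ} (F : Filter (EuclideanSpace ℝ (Fin n))) : Prop :=
  F.NeBot ∧ ∀ A ∈ F, ∀ B : Set (EuclideanSpace ℝ (Fin n)),
    volume (symmDiff A B) = 0 → B ∈ F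

/-- An *essential ultrafilter* is a maximal essential filter. -/
def EssentialUltrafilter {n : ℕ} (U : Filter (EuclideanSpace ℝ (Fin n))) : Prop :=
  EssentialFilter U ∧ ∀ V : Filter (EuclideanSpace ℝ (Fin n)),
    EssentialFilter V → (∀ s ∈ U, s ∈ V) → V = U

/-- For every essential ultrafilter `𝔘` on `ℝⁿ` and every set `A ⊆ ℝⁿ`,
either `A ∈ 𝔘` or its complement belongs to `𝔘`. -/
theorem stmt_8 (n : ℕ) (U : Filter (EuclideanSpace ℝ (Fin n)))
    (hU : EssentialUltrafilter U) (A : Set (EuclideanSpace ℝ (Fin n))) :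
    A ∈ U ∨ Aᶜ ∈ U := by
  by_cases h : ∃ S ∈ U, volume (S ∩ A) = 0
  · right
    obtain ⟨S, hS, hnull⟩ := h
    have hsd : symmDiff S (S ∩ Aᶜ) = S ∩ A := by
      ext x; simp [Set.symmDiff_def]; tauto
    have hmem : S ∩ Aᶜ ∈ U := hU.1.2 S hS (S ∩ Aᶜ) (by rw [hsd]; exact hnull)
    exact Filter.mem_of_superset hmem Set.inter_subset_right
  · left
    push_neg at h
    set V : Filter (EuclideanSpace ℝ (Fin n)) :=
      { sets := {B | ∃ S ∈ U, volume ((S ∩ A) \ B) = 0}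
        univ_sets := ⟨Set.univ, Filter.univ_mem, by simp⟩
        sets_of_superset := by
          rintro B C ⟨S, hS, h0⟩ hsub
          exact ⟨S, hS, measure_mono_null (Set.diff_subset_diff_right hsub) h0⟩
        inter_sets := by
          rintro B C ⟨S, hS, h0⟩ ⟨T, hT, h0'⟩
          refine ⟨S ∩ T, Filter.inter_mem hS hT, measure_mono_null ?_
            (measure_union_null h0 h0')⟩
          rintro x ⟨⟨⟨h1, h2⟩, h3⟩, h4⟩
          by_cases hB : x ∈ B
          · exact Or.inr ⟨⟨h2, h3⟩, fun hC => h4 ⟨hB, hC⟩⟩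
          · exact Or.inl ⟨⟨h1, h3⟩, hB⟩ } with hVdef
    have memV : ∀ B : Set (EuclideanSpace ℝ (Fin n)),
        B ∈ V ↔ ∃ S ∈ U, volume ((S ∩ A) \ B) = 0 := fun B => Iff.rfl
    have hVess : EssentialFilter V := by
      constructor
      · refine ⟨fun hbot => ?_⟩
        have : (∅ : Set (EuclideanSpace ℝ (Fin n))) ∈ V := by
          rw [hbot]; exact Filter.mem_bot
        obtain ⟨S, hS, h0⟩ := (memV _).1 this
        simp only [Set.diff_empty] at h0
        exact h S hS h0
      · rintro B hB C hsd
        obtain ⟨S, hS, h0⟩ := (memV _).1 hB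
        have h1 : B \ C ⊆ symmDiff B C := by
          rw [Set.symmDiff_def]; exact Set.subset_union_left
        have h2 : (S ∩ A) \ C ⊆ ((S ∩ A) \ B) ∪ (B \ C) := by
          rintro x ⟨hx, hxC⟩
          by_cases hBx : x ∈ B
          · exact Or.inr ⟨hBx, hxC⟩
          · exact Or.inl ⟨hx, hBx⟩
        exact (memV _).2 ⟨S, hS, measure_mono_null h2
          (measure_union_null h0 (measure_mono_null h1 hsd))⟩
    have hsub : ∀ s ∈ U, s ∈ V := by
      intro s hs
      exact (memV _).2 ⟨s, hs, by
        rw [Set.diff_eq_empty.2 Set.inter_subset_left, measure_empty]⟩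
    have hVU : V = U := hU.2 V hVess hsub
    have hA : A ∈ V := (memV _).2 ⟨Set.univ, Filter.univ_mem, by simp⟩
    rwa [hVU] at hA
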